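/- Let P be a polynomial over ℂ of degree n with multiplicity vector μ and conjugate μ̄ = (μ̄_1,…,μ̄_n). Then for each i ≥ 1, the subresultant R_{(μ̄_1,…,μ̄_i)}(P^(0), P^(1), …, P^(i)) is a nonzero constant multiple of gcd(P^(0), P^(1), …, P^(i)). -/

import Mathlib

open Polynomial Finset

/-- Determinant polynomial of a `p × q` matrix (for `p ≤ q`): the determinant of the
`p × p` matrix over `R[X]` keeping the first `p - 1` columns and replacing the last column
by the column of "row polynomials" `∑_{j ≥ p-1} M_{r,j}·x^{q-1-j}`. -/
noncomputable def detPoly {R : Type*} [CommRing R] {p q : ℕ}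
    (M : Matrix (Fin p) (Fin q) R) : Polynomial R :=
  Matrix.det (Matrix.of fun r c : Fin p =>
    if hc : (c : ℕ) < min (p - 1) q then C (M r ⟨c, (lt_min_iff.mp hc).2⟩)
    else ∑ j : Fin q, if p - 1 ≤ (j : ℕ) then C (M r j) * X ^ (q - 1 - (j : ℕ)) else 0)

/-- The quantity `δ_0`: `max_{i, δ_i ≠ 0} (d_i + δ_i) − d_0` when this max is `≥ d_0`,
and `1` otherwise. -/
def delta0 (d0 : ℕ) {t : ℕ} (d δ : Fin t → ℕ) : ℕ :=
  if d0 ≤ (Finset.univ.filter fun i => δ i ≠ 0).sup (fun i => d i + δ i) then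
    (Finset.univ.filter fun i => δ i ≠ 0).sup (fun i => d i + δ i) - d0
  else 1

/-- The `δ`-th subresultant `R_δ(F_0, F_1, …, F_t)`: the determinant polynomial of the
generalized Sylvester matrix whose rows are the coefficient vectors (in descending powers,
over `δ_0 + d_0` columns) of `x^{δ_i-1}F_i, …, x^0F_i` for `i = 0, 1, …, t`, with
`δ' = (δ_0, δ_1, …, δ_t)`. -/
noncomputable def subres {R : Type*} [CommRing R] {t : ℕ}
    (F0 : Polynomial R) (F : Fin t → Polynomial R) (δ : Fin t → ℕ) : Polynomial R :=
  let d0 := F0.natDegree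
  let δ0 := delta0 d0 (fun i => (F i).natDegree) δ
  let δ' : Fin (t + 1) → ℕ := Fin.cons δ0 δ
  let F' : Fin (t + 1) → Polynomial R := Fin.cons F0 F
  detPoly (Matrix.of fun (r : Fin (∑ i, δ' i)) (c : Fin (δ0 + d0)) =>
    ∑ i : Fin (t + 1),
      if (∑ i' ∈ Finset.univ.filter (fun i' => i' < i), δ' i') ≤ (r : ℕ) ∧
          (r : ℕ) < (∑ i' ∈ Finset.univ.filter (fun i' => i' < i), δ' i') + δ' i then
        (X ^ (δ' i - 1 - ((r : ℕ) - ∑ i' ∈ Finset.univ.filter (fun i' => i' < i), δ' i')) *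
            F' i).coeff (δ0 + d0 - 1 - (c : ℕ))
      else 0)

/-!
Put `H = ∏ₖ (X - rₖ) ^ (μₖ - i)`. Since `P⁽ʲ⁾` vanishes to order exactly `μₖ - j` at `rₖ`,
comparing root multiplicities shows that `gcd(P⁽⁰⁾, …, P⁽ⁱ⁾)` is associated to `H`.

Every row of the generalized Sylvester matrix is the coefficient vector of some `xᵉ P⁽ʲ⁾` with
`j ≤ i`, so `H` divides every row polynomial, hence the determinant polynomial of this `p × q`
matrix, whose degree is at most `q - p = deg H`. Its coefficient of degree `q - p` is the determinant of the leading
`p × p` block. Were that block singular, some nontrivial combination of the row polynomials would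
have degree `< deg H` while being divisible by `H`, so it would vanish; that is a relation
`∑ Bⱼ P⁽ʲ⁾ = 0` with `deg Bⱼ < μ̄ⱼ` and not all `Bⱼ` zero. For the largest `j` with `Bⱼ ≠ 0`,
each `rₖ` with `μₖ ≥ j` divides the other terms to a higher order than it divides `P⁽ʲ⁾`, so it is
a root of `Bⱼ`; then `deg Bⱼ ≥ μ̄ⱼ`, a contradiction.
-/

open Matrix

theorem Fin.univ_filter_val_lt_eq_map_castLEEmb {p q : ℕ} (h : p ≤ q) :
    (univ.filter fun j : Fin q => (j : ℕ) < p) = univ.map (Fin.castLEEmb h) := by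
  ext j
  simp only [mem_filter, mem_univ, true_and, mem_map, Fin.castLEEmb_apply]
  exact ⟨fun hj => ⟨⟨j, hj⟩, rfl⟩, fun ⟨c, hc⟩ => hc ▸ c.2⟩

section DetPoly

variable {R : Type*} [CommRing R] {p q : ℕ}

noncomputable def rowPoly (M : Matrix (Fin p) (Fin q) R) (x : Fin p) : R[X] :=
  ∑ j : Fin q, C (M x j) * X ^ (q - 1 - (j : ℕ))

theorem coeff_rowPoly (M : Matrix (Fin p) (Fin q) R) (x : Fin p) (e : ℕ) :
    (rowPoly M x).coeff e = if h : e < q then M x ⟨q - 1 - e, by omega⟩ else 0 := by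
  simp only [rowPoly, finsetSum_coeff, coeff_C_mul_X_pow]
  split_ifs with h
  · rw [Finset.sum_eq_single ⟨q - 1 - e, by omega⟩, if_pos (by simp; omega)]
    · exact fun j _ hj => if_neg fun he => hj (Fin.ext (by simp; omega))
    · simp
  · exact Finset.sum_eq_zero fun j _ => if_neg (by omega)

noncomputable def detPolyMatrix (M : Matrix (Fin p) (Fin q) R) : Matrix (Fin p) (Fin p) R[X] :=
  Matrix.of fun r c : Fin p =>
    if hc : (c : ℕ) < min (p - 1) q then C (M r ⟨c, (lt_min_iff.mp hc).2⟩)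
    else ∑ j : Fin q, if p - 1 ≤ (j : ℕ) then C (M r j) * X ^ (q - 1 - (j : ℕ)) else 0

theorem detPoly_eq_det_detPolyMatrix (M : Matrix (Fin p) (Fin q) R) :
    detPoly M = (detPolyMatrix M).det := rfl

theorem detPolyMatrix_castSucc (hpq : p + 1 ≤ q) (M : Matrix (Fin (p + 1)) (Fin q) R)
    (x : Fin (p + 1)) (c : Fin p) :
    detPolyMatrix M x c.castSucc = C (M x (c.castSucc.castLE hpq)) := by
  simp only [detPolyMatrix, of_apply, Fin.val_castSucc, add_tsub_cancel_right,
    dif_pos (lt_min c.2 (by omega : (c : ℕ) < q))]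
  rfl

theorem detPolyMatrix_last (M : Matrix (Fin (p + 1)) (Fin q) R) (x : Fin (p + 1)) :
    detPolyMatrix M x (Fin.last p) =
      ∑ j : Fin q, if p ≤ (j : ℕ) then C (M x j) * X ^ (q - 1 - (j : ℕ)) else 0 := by
  simp [detPolyMatrix]

theorem rowPoly_eq_sum_smul_detPolyMatrix (hpq : p + 1 ≤ q)
    (M : Matrix (Fin (p + 1)) (Fin q) R) (x : Fin (p + 1)) :
    rowPoly M x = ∑ c : Fin (p + 1), (if (c : ℕ) < p then (X : R[X]) ^ (q - 1 - (c : ℕ)) else 1) •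
      detPolyMatrix M x c := by
  have hsplit : rowPoly M x = (∑ j ∈ univ.filter fun j : Fin q => (j : ℕ) < p,
      C (M x j) * X ^ (q - 1 - (j : ℕ))) + detPolyMatrix M x (Fin.last p) := by
    rw [detPolyMatrix_last, ← Finset.sum_filter, rowPoly,
      ← Finset.sum_filter_add_sum_filter_not univ fun j : Fin q => (j : ℕ) < p]
    simp only [not_lt]
  rw [hsplit, Fin.sum_univ_castSucc, Fin.val_last, if_neg (lt_irrefl p), one_smul,
    Fin.univ_filter_val_lt_eq_map_castLEEmb (by omega : p ≤ q), Finset.sum_map]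
  congr 1
  refine Finset.sum_congr rfl fun c _ => ?_
  rw [Fin.val_castSucc, if_pos c.2, detPolyMatrix_castSucc hpq, smul_eq_mul, mul_comm]
  rfl

theorem detPoly_eq_det_updateCol_rowPoly (hpq : p + 1 ≤ q) (M : Matrix (Fin (p + 1)) (Fin q) R) :
    detPoly M = ((detPolyMatrix M).updateCol (Fin.last p) (rowPoly M)).det := by
  have h := det_updateCol_sum (detPolyMatrix M) (Fin.last p)
    fun c => if (c : ℕ) < p then (X : R[X]) ^ (q - 1 - (c : ℕ)) else 1
  rw [if_neg (by simp), one_smul] at h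
  rw [detPoly_eq_det_detPolyMatrix, ← h]
  congr 2
  exact _root_.funext fun x => (rowPoly_eq_sum_smul_detPolyMatrix hpq M x).symm

theorem dvd_detPoly (hp : 1 ≤ p) (hpq : p ≤ q) (M : Matrix (Fin p) (Fin q) R) {H : R[X]}
    (hH : ∀ x, H ∣ rowPoly M x) : H ∣ detPoly M := by
  obtain ⟨p, rfl⟩ : ∃ p', p = p' + 1 := ⟨p - 1, by omega⟩
  choose v hv using hH
  rw [detPoly_eq_det_updateCol_rowPoly hpq, show rowPoly M = H • v from funext hv,
    det_updateCol_smul]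
  exact dvd_mul_right _ _

theorem coeff_detPolyMatrix_last (hpq : p + 1 ≤ q) (M : Matrix (Fin (p + 1)) (Fin q) R)
    (x : Fin (p + 1)) :
    (detPolyMatrix M x (Fin.last p)).coeff (q - (p + 1)) = M x ((Fin.last p).castLE hpq) := by
  rw [detPolyMatrix_last, finsetSum_coeff, Finset.sum_eq_single ((Fin.last p).castLE hpq)]
  · simp only [Fin.val_castLE, Fin.val_last, le_refl, if_true, coeff_C_mul_X_pow]
    rw [if_pos (by omega)]
  · intro j _ hj
    split_ifs with h
    · rw [coeff_C_mul_X_pow, if_neg]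
      intro he
      exact hj (Fin.ext (by simp; omega))
    · exact coeff_zero _
  · simp

theorem natDegree_detPoly_le (hp : 1 ≤ p) (hpq : p ≤ q) (M : Matrix (Fin p) (Fin q) R) :
    (detPoly M).natDegree ≤ q - p := by
  obtain ⟨p, rfl⟩ : ∃ p', p = p' + 1 := ⟨p - 1, by omega⟩
  rw [detPoly_eq_det_detPolyMatrix, det_apply']
  refine natDegree_sum_le_of_forall_le _ _ fun σ _ => ?_
  rw [Fin.prod_univ_castSucc]
  simp only [detPolyMatrix_castSucc hpq, ← map_prod]
  refine natDegree_mul_le.trans ?_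
  rw [natDegree_intCast, zero_add]
  refine natDegree_mul_le.trans ?_
  rw [natDegree_C, zero_add, detPolyMatrix_last]
  refine natDegree_sum_le_of_forall_le _ _ fun j _ => ?_
  split_ifs with h
  · exact (natDegree_C_mul_X_pow_le _ _).trans (by omega)
  · simp

theorem coeff_detPoly (hp : 1 ≤ p) (hpq : p ≤ q) (M : Matrix (Fin p) (Fin q) R) :
    (detPoly M).coeff (q - p) = (M.submatrix id (Fin.castLE hpq)).det := by
  obtain ⟨p, rfl⟩ : ∃ p', p = p' + 1 := ⟨p - 1, by omega⟩
  rw [detPoly_eq_det_detPolyMatrix, det_apply', det_apply', finsetSum_coeff]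
  refine Finset.sum_congr rfl fun σ _ => ?_
  rw [Fin.prod_univ_castSucc, Fin.prod_univ_castSucc]
  simp only [detPolyMatrix_castSucc hpq, ← map_prod, coeff_intCast_mul, coeff_C_mul,
    coeff_detPolyMatrix_last hpq M, submatrix_apply, id]

end DetPoly

section DetPolyField

variable {K : Type*} [Field K] {p q : ℕ}

theorem det_submatrix_castLE_ne_zero (hpq : p ≤ q) (M : Matrix (Fin p) (Fin q) K) {H : K[X]}
    (hHdeg : H.natDegree = q - p) (hH : ∀ x, H ∣ rowPoly M x)
    (hli : LinearIndependent K (rowPoly M)) :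
    (M.submatrix id (Fin.castLE hpq)).det ≠ 0 := by
  intro hdet
  obtain ⟨v, hv, hvM⟩ := exists_vecMul_eq_zero_iff.mpr hdet
  set Q := ∑ x, v x • rowPoly M x
  have hQ_coeff : ∀ e, q - p ≤ e → Q.coeff e = 0 := by
    intro e he
    simp only [Q, finsetSum_coeff, coeff_smul, coeff_rowPoly, smul_eq_mul]
    by_cases h : e < q
    · have hc := congrFun hvM ⟨q - 1 - e, by omega⟩
      simp only [vecMul, dotProduct, submatrix_apply, id, Pi.zero_apply] at hc
      simpa [dif_pos h] using hc
    · simp [dif_neg h]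
  have hQ : Q = 0 := by
    by_contra hQ
    have hHQ : H ∣ Q := Finset.dvd_sum fun x _ => by
      rw [smul_eq_C_mul]; exact (hH x).mul_left _
    have hle := natDegree_le_of_dvd hHQ hQ
    have hlt : Q.natDegree < q - p := by
      by_contra! h
      exact hQ (leadingCoeff_eq_zero.mp (hQ_coeff _ h))
    omega
  exact hv (funext (Fintype.linearIndependent_iff.mp hli v hQ))

theorem exists_detPoly_eq_C_mul (hp : 1 ≤ p) (hpq : p ≤ q) (M : Matrix (Fin p) (Fin q) K)
    {H : K[X]} (hHm : H.Monic) (hHdeg : H.natDegree = q - p) (hH : ∀ x, H ∣ rowPoly M x)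
    (hli : LinearIndependent K (rowPoly M)) :
    ∃ c ≠ 0, detPoly M = C c * H := by
  have hlead : (detPoly M).coeff (q - p) ≠ 0 := by
    rw [coeff_detPoly hp hpq]
    exact det_submatrix_castLE_ne_zero hpq M hHdeg hH hli
  have hne : detPoly M ≠ 0 := fun h => hlead (by rw [h, coeff_zero])
  refine ⟨_, leadingCoeff_ne_zero.mpr hne,
    eq_leadingCoeff_mul_of_monic_of_dvd_of_natDegree_le hHm (dvd_detPoly hp hpq M hH) ?_⟩
  rw [hHdeg]
  exact natDegree_detPoly_le hp hpq M

end DetPolyField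

section Sylvester

variable {R : Type*} [CommRing R] {s : ℕ}

def blockOffset (δ : Fin s → ℕ) (i : Fin s) : ℕ :=
  ∑ i' ∈ univ.filter (fun i' => i' < i), δ i'

noncomputable def sylvesterMatrix (F : Fin s → R[X]) (δ : Fin s → ℕ) (q : ℕ) :
    Matrix (Fin (∑ i, δ i)) (Fin q) R :=
  Matrix.of fun r c => ∑ i,
    if blockOffset δ i ≤ (r : ℕ) ∧ (r : ℕ) < blockOffset δ i + δ i then
      (X ^ (δ i - 1 - ((r : ℕ) - blockOffset δ i)) * F i).coeff (q - 1 - (c : ℕ))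
    else 0

theorem subres_eq_detPoly_sylvesterMatrix {t : ℕ} (F0 : R[X]) (F : Fin t → R[X])
    (δ : Fin t → ℕ) :
    subres F0 F δ = detPoly (sylvesterMatrix (Fin.cons F0 F : Fin (t + 1) → R[X])
      (Fin.cons (delta0 F0.natDegree (fun i => (F i).natDegree) δ) δ)
      (delta0 F0.natDegree (fun i => (F i).natDegree) δ + F0.natDegree)) := rfl

theorem blockOffset_add_le (δ : Fin s → ℕ) {i i' : Fin s} (h : i < i') :
    blockOffset δ i + δ i ≤ blockOffset δ i' := by
  rw [blockOffset, add_comm, ← Finset.sum_insert (by simp)]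
  refine Finset.sum_le_sum_of_subset fun x hx => ?_
  simp only [mem_insert, mem_filter, mem_univ, true_and] at hx ⊢
  rcases hx with rfl | hx
  exacts [h, hx.trans h]

theorem val_finSigmaFinEquiv (δ : Fin s → ℕ) (i : Fin s) (j : Fin (δ i)) :
    (finSigmaFinEquiv ⟨i, j⟩ : ℕ) = blockOffset δ i + j := by
  rw [finSigmaFinEquiv_apply, blockOffset,
    show (univ.filter fun i' : Fin s => i' < i) =
      univ.filter fun i' : Fin s => (i' : ℕ) < (i : ℕ) from rfl,
    Fin.univ_filter_val_lt_eq_map_castLEEmb i.2.le, Finset.sum_map]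
  rfl

theorem sylvesterMatrix_finSigmaFinEquiv (F : Fin s → R[X]) (δ : Fin s → ℕ) (q : ℕ)
    (i : Fin s) (j : Fin (δ i)) (c : Fin q) :
    sylvesterMatrix F δ q (finSigmaFinEquiv ⟨i, j⟩) c =
      (X ^ (δ i - 1 - (j : ℕ)) * F i).coeff (q - 1 - (c : ℕ)) := by
  have hj := j.2
  rw [sylvesterMatrix, of_apply, Finset.sum_eq_single i, if_pos, val_finSigmaFinEquiv,
    add_tsub_cancel_left]
  · rw [val_finSigmaFinEquiv]; omega
  · intro i' _ hi'
    refine if_neg ?_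
    rw [val_finSigmaFinEquiv]
    rcases lt_or_gt_of_ne hi' with h | h <;> have := blockOffset_add_le δ h <;> omega
  · simp

variable {F : Fin s → R[X]} {δ : Fin s → ℕ} {q : ℕ}

theorem rowPoly_sylvesterMatrix_finSigmaFinEquiv (hdeg : ∀ i, (F i).natDegree + δ i ≤ q)
    (i : Fin s) (j : Fin (δ i)) :
    rowPoly (sylvesterMatrix F δ q) (finSigmaFinEquiv ⟨i, j⟩) =
      X ^ (δ i - 1 - (j : ℕ)) * F i := by
  have hj := j.2
  have hi := hdeg i
  ext e
  rw [coeff_rowPoly]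
  split_ifs with he
  · rw [sylvesterMatrix_finSigmaFinEquiv]
    congr 1
    dsimp only
    omega
  · refine (coeff_eq_zero_of_natDegree_lt ?_).symm
    refine natDegree_mul_le.trans_lt ?_
    have := natDegree_X_pow_le (R := R) (δ i - 1 - (j : ℕ))
    omega

theorem dvd_rowPoly_sylvesterMatrix (hdeg : ∀ i, (F i).natDegree + δ i ≤ q) {H : R[X]}
    (hH : ∀ i, H ∣ F i) (x : Fin (∑ i, δ i)) : H ∣ rowPoly (sylvesterMatrix F δ q) x := by
  obtain ⟨⟨i, j⟩, rfl⟩ := finSigmaFinEquiv.surjective x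
  rw [rowPoly_sylvesterMatrix_finSigmaFinEquiv hdeg]
  exact (hH i).mul_left _

end Sylvester

section SylvesterField

variable {K : Type*} [Field K] {s : ℕ} {F : Fin s → K[X]} {δ : Fin s → ℕ} {q : ℕ}

theorem linearIndependent_rowPoly_sylvesterMatrix (hdeg : ∀ i, (F i).natDegree + δ i ≤ q)
    (hrel : ∀ B : Fin s → K[X], (∀ i, (B i).degree < δ i) → ∑ i, B i * F i = 0 → B = 0) :
    LinearIndependent K (rowPoly (sylvesterMatrix F δ q)) := by
  rw [← linearIndependent_equiv finSigmaFinEquiv, Fintype.linearIndependent_iff]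
  intro g hg
  -- the coefficients of block `i`, read in reverse, form a multiplier of `F i` of degree `< δ i`
  let B : Fin s → K[X] := fun i => ∑ j : Fin (δ i), C (g ⟨i, j.rev⟩) * X ^ (j : ℕ)
  have hB : B = 0 := by
    refine hrel B (fun i => degree_sum_fin_lt _) ?_
    rw [← hg, Fintype.sum_sigma]
    refine Finset.sum_congr rfl fun i _ => ?_
    simp only [Function.comp_apply, rowPoly_sylvesterMatrix_finSigmaFinEquiv hdeg]
    rw [Finset.sum_mul, ← Equiv.sum_comp Fin.revPerm]
    refine Finset.sum_congr rfl fun j _ => ?_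
    have hj := j.2
    rw [Fin.revPerm_apply, smul_eq_C_mul, Fin.val_rev, Fin.rev_rev,
      show δ i - ((j : ℕ) + 1) = δ i - 1 - j by omega, mul_assoc]
  rintro ⟨i, j⟩
  have hcoeff := congrArg (coeff · (j.rev : ℕ)) (congrFun hB i)
  simp only [B, finsetSum_coeff, coeff_C_mul_X_pow, Pi.zero_apply, coeff_zero] at hcoeff
  rwa [Finset.sum_eq_single j.rev (fun j' _ hj' => if_neg fun h => hj' (Fin.ext h.symm))
    (by simp), if_pos rfl, Fin.rev_rev] at hcoeff

theorem exists_detPoly_sylvesterMatrix_eq_C_mul (hp : 1 ≤ ∑ i, δ i) (hpq : ∑ i, δ i ≤ q)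
    (hdeg : ∀ i, (F i).natDegree + δ i ≤ q)
    (hrel : ∀ B : Fin s → K[X], (∀ i, (B i).degree < δ i) → ∑ i, B i * F i = 0 → B = 0)
    {H : K[X]} (hHm : H.Monic) (hHdeg : H.natDegree = q - ∑ i, δ i) (hH : ∀ i, H ∣ F i) :
    ∃ c ≠ 0, detPoly (sylvesterMatrix F δ q) = C c * H :=
  exists_detPoly_eq_C_mul hp hpq _ hHm hHdeg (dvd_rowPoly_sylvesterMatrix hdeg hH)
    (linearIndependent_rowPoly_sylvesterMatrix hdeg hrel)

end SylvesterField

namespace Polynomial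

theorem natDegree_iterate_derivative_eq {R : Type*} [Semiring R] [IsAddTorsionFree R]
    (p : R[X]) (k : ℕ) : (derivative^[k] p).natDegree = p.natDegree - k := by
  induction k with
  | zero => rfl
  | succ k ih => rw [Function.iterate_succ_apply', natDegree_derivative, ih, Nat.sub_sub]

theorem iterate_derivative_ne_zero {R : Type*} [Semiring R] [IsAddTorsionFree R] {p : R[X]}
    (hp : p ≠ 0) {k : ℕ} (hk : k ≤ p.natDegree) : derivative^[k] p ≠ 0 := by
  cases k with
  | zero => exact hp
  | succ k =>
    rw [Function.iterate_succ_apply', derivative_ne_zero, natDegree_iterate_derivative_eq]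
    omega

theorem rootMultiplicity_le_natDegree {R : Type*} [CommRing R] [IsDomain R] (p : R[X]) (a : R) :
    rootMultiplicity a p ≤ p.natDegree := by
  classical
  rw [← count_roots]
  exact (Multiset.count_le_card _ _).trans (card_roots' p)

theorem rootMultiplicity_iterate_derivative {R : Type*} [CommRing R] [IsDomain R] [CharZero R]
    (p : R[X]) (a : R) {k : ℕ} (hk : k ≤ rootMultiplicity a p) :
    rootMultiplicity a (derivative^[k] p) = rootMultiplicity a p - k := by
  induction k with
  | zero => rfl
  | succ k ih =>
    rw [Function.iterate_succ_apply',
      derivative_rootMultiplicity_of_root (isRoot_iterate_derivative_of_lt_rootMultiplicity hk),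
      ih (by omega), Nat.sub_sub]

theorem monic_prod_X_sub_C_pow {R ι : Type*} [CommRing R] (s : Finset ι) (r : ι → R)
    (e : ι → ℕ) : (∏ k ∈ s, (X - C (r k)) ^ e k).Monic :=
  monic_prod_of_monic _ _ fun _ _ => (monic_X_sub_C _).pow _

theorem natDegree_prod_X_sub_C_pow {R ι : Type*} [CommRing R] [Nontrivial R] (s : Finset ι)
    (r : ι → R) (e : ι → ℕ) : (∏ k ∈ s, (X - C (r k)) ^ e k).natDegree = ∑ k ∈ s, e k := by
  rw [natDegree_prod_of_monic _ _ fun _ _ => (monic_X_sub_C _).pow _]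
  simp [(monic_X_sub_C _).natDegree_pow]

theorem rootMultiplicity_prod_X_sub_C_pow {R ι : Type*} [CommRing R] [IsDomain R]
    [DecidableEq R] (s : Finset ι) (r : ι → R) (e : ι → ℕ) (a : R) :
    rootMultiplicity a (∏ k ∈ s, (X - C (r k)) ^ e k) = ∑ k ∈ s, if r k = a then e k else 0 := by
  rw [← count_roots, roots_prod _ _ (monic_prod_X_sub_C_pow s r e).ne_zero]
  simp [Multiset.count_bind, roots_pow, Multiset.count_singleton, eq_comm]

theorem rootMultiplicity_prod_X_sub_C_pow_tsub {R ι : Type*} [CommRing R] [IsDomain R]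
    [Fintype ι] {r : ι → R} (hr : Function.Injective r) (e : ι → ℕ) (t : ℕ) (a : R) :
    rootMultiplicity a (∏ k, (X - C (r k)) ^ (e k - t)) =
      rootMultiplicity a (∏ k, (X - C (r k)) ^ e k) - t := by
  classical
  simp only [rootMultiplicity_prod_X_sub_C_pow]
  by_cases ha : ∃ k, r k = a
  · obtain ⟨k, rfl⟩ := ha
    simp [hr.eq_iff]
  · simp only [not_exists] at ha
    simp [ha]

theorem X_sub_C_dvd_of_sum_mul_iterate_derivative_eq_zero {R : Type*} [CommRing R] [IsDomain R]
    [CharZero R] {P : R[X]} (hP : P ≠ 0) {s : ℕ} (B : Fin (s + 1) → R[X])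
    (hsum : ∑ i, B i * derivative^[i] P = 0) {a : R} (ha : s ≤ rootMultiplicity a P) :
    X - C a ∣ B (Fin.last s) := by
  have hPs : derivative^[s] P ≠ 0 :=
    iterate_derivative_ne_zero hP (ha.trans (rootMultiplicity_le_natDegree P a))
  have hdvd : (X - C a) ^ (rootMultiplicity a P - s + 1) ∣ B (Fin.last s) * derivative^[s] P := by
    rw [Fin.sum_univ_castSucc, add_eq_zero_iff_neg_eq, Fin.val_last] at hsum
    rw [← hsum, dvd_neg]
    refine Finset.dvd_sum fun i _ => Dvd.dvd.mul_left ?_ _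
    refine (pow_dvd_pow _ ?_).trans
      (pow_sub_dvd_iterate_derivative_of_pow_dvd _ (pow_rootMultiplicity_dvd P a))
    have := i.2
    simp only [Fin.val_castSucc]
    omega
  by_cases hB : B (Fin.last s) = 0
  · rw [hB]; exact dvd_zero _
  rw [← le_rootMultiplicity_iff (mul_ne_zero hB hPs), rootMultiplicity_mul (mul_ne_zero hB hPs),
    rootMultiplicity_iterate_derivative P a ha] at hdvd
  rw [dvd_iff_isRoot]
  exact (rootMultiplicity_pos hB).mp (by omega)

theorem eq_zero_of_sum_mul_iterate_derivative_eq_zero {K ι : Type*} [Field K] [CharZero K]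
    [Fintype ι] {P : K[X]} (hP : P ≠ 0) {r : ι → K} (hr : Function.Injective r) {μ : ι → ℕ}
    (hμ : ∀ k, μ k ≤ rootMultiplicity (r k) P) {N : ℕ} (B : Fin N → K[X])
    (hdeg : ∀ i, (B i).degree < #{k | (i : ℕ) ≤ μ k})
    (hsum : ∑ i, B i * derivative^[i] P = 0) : B = 0 := by
  induction N with
  | zero => exact Subsingleton.elim _ _
  | succ N ih =>
    have hlast : B (Fin.last N) = 0 := by
      by_contra hB
      have hdvd : ∏ k with N ≤ μ k, (X - C (r k)) ∣ B (Fin.last N) :=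
        Finset.prod_dvd_of_coprime ((pairwise_coprime_X_sub_C hr).set_pairwise _) fun k hk =>
          X_sub_C_dvd_of_sum_mul_iterate_derivative_eq_zero hP B hsum
            ((mem_filter.mp hk).2.trans (hμ k))
      have hle := degree_le_of_dvd hdvd hB
      rw [degree_prod, Finset.sum_congr rfl fun k _ => degree_X_sub_C (r k)] at hle
      have := hdeg (Fin.last N)
      simp only [Finset.sum_const, nsmul_one, Fin.val_last] at hle this
      exact absurd (hle.trans_lt this) (lt_irrefl _)
    rw [Fin.sum_univ_castSucc, hlast, zero_mul, add_zero] at hsum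
    have hinit := ih (fun i => B i.castSucc) (fun i => hdeg i.castSucc) hsum
    funext i
    exact Fin.lastCases hlast (fun i => congrFun hinit i) i

theorem associated_gcd_iterate_derivative {K : Type*} [Field K] [IsAlgClosed K] [CharZero K]
    [DecidableEq K] {P H : K[X]} (hP : P ≠ 0) (hH : H ≠ 0) (t : ℕ)
    (hmult : ∀ a, rootMultiplicity a H = rootMultiplicity a P - t) :
    Associated ((range (t + 1)).gcd fun j => derivative^[j] P) H := by
  set G := (range (t + 1)).gcd fun j => derivative^[j] P
  have hG : G ≠ 0 := fun h => hP (Finset.gcd_eq_zero_iff.mp h 0 (by simp))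
  refine associated_of_dvd_dvd ?_ (Finset.dvd_gcd fun j hj => ?_)
  · rw [IsAlgClosed.dvd_iff_roots_le_roots hG hH, Multiset.le_iff_count]
    intro a
    rw [count_roots, count_roots, hmult]
    have hj : min t (rootMultiplicity a P) ≤ rootMultiplicity a P := min_le_right _ _
    have hPj := iterate_derivative_ne_zero hP (hj.trans (rootMultiplicity_le_natDegree P a))
    have hle := (le_rootMultiplicity_iff hPj).mpr
      ((pow_rootMultiplicity_dvd G a).trans (Finset.gcd_dvd (mem_range.mpr (by omega))))
    rw [rootMultiplicity_iterate_derivative P a hj] at hle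
    omega
  · by_cases hPj : derivative^[j] P = 0
    · rw [hPj]; exact dvd_zero _
    rw [IsAlgClosed.dvd_iff_roots_le_roots hH hPj, Multiset.le_iff_count]
    intro a
    rw [count_roots, count_roots, hmult]
    have := mem_range.mp hj
    by_cases hja : j ≤ rootMultiplicity a P
    · rw [rootMultiplicity_iterate_derivative P a hja]; omega
    · omega

end Polynomial

theorem sum_range_card_filter_succ_le {ι : Type*} [Fintype ι] (μ : ι → ℕ) (t : ℕ) :
    ∑ j ∈ range t, #{k | j + 1 ≤ μ k} = ∑ k, min (μ k) t := by
  simp only [card_filter]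
  rw [Finset.sum_comm]
  refine Finset.sum_congr rfl fun k _ => ?_
  rw [← card_filter, show (range t).filter (· + 1 ≤ μ k) = range (min (μ k) t) by
    ext j; simp only [mem_filter, mem_range]; omega, card_range]

theorem delta0_eq_sub {t d0 D : ℕ} {d δ : Fin t → ℕ} (i₀ : Fin t) (hi₀ : δ i₀ ≠ 0)
    (hD : d i₀ + δ i₀ = D) (hle : ∀ i, d i + δ i ≤ D) (hd0 : d0 ≤ D) :
    delta0 d0 d δ = D - d0 := by
  have hsup : (univ.filter fun i => δ i ≠ 0).sup (fun i => d i + δ i) = D :=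
    le_antisymm (Finset.sup_le fun i _ => hle i)
      (hD ▸ Finset.le_sup (f := fun i => d i + δ i) (mem_filter.mpr ⟨mem_univ _, hi₀⟩))
  rw [delta0, hsup, if_pos hd0]

theorem delta0_iterate_derivative {R : Type*} [Semiring R] [IsAddTorsionFree R] {m : ℕ}
    (hm : 0 < m) {μ : Fin m → ℕ} (hpos : ∀ k, 1 ≤ μ k) (P : R[X]) {t : ℕ} (ht : 1 ≤ t)
    (htn : t ≤ P.natDegree) :
    delta0 P.natDegree (fun j : Fin t => (derivative^[(j : ℕ) + 1] P).natDegree)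
      (fun j : Fin t => #{k | (j : ℕ) + 1 ≤ μ k}) = m - 1 := by
  have hcard (j : Fin t) : #{k | (j : ℕ) + 1 ≤ μ k} ≤ m :=
    (card_filter_le _ _).trans (card_fin m).le
  have hcard_zero : #{k | 0 + 1 ≤ μ k} = m := by
    rw [filter_true_of_mem fun k _ => hpos k, card_univ, Fintype.card_fin]
  rw [delta0_eq_sub (D := P.natDegree - 1 + m) ⟨0, ht⟩ (by simp only [hcard_zero]; omega)
    (by rw [natDegree_iterate_derivative_eq, hcard_zero])
    (fun j => by have := hcard j; have := j.2; rw [natDegree_iterate_derivative_eq]; omega)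
    (by omega)]
  omega

theorem exists_subres_iterate_derivative_eq_C_mul {K : Type*} [Field K] [CharZero K] {m : ℕ}
    (hm : 0 < m) {r : Fin m → K} (hr : Function.Injective r) {μ : Fin m → ℕ}
    (hpos : ∀ k, 1 ≤ μ k) {P : K[X]} (hP : P ≠ 0) (hdegP : P.natDegree = ∑ k, μ k)
    (hμ : ∀ k, μ k ≤ rootMultiplicity (r k) P) {t : ℕ} (ht : 1 ≤ t) (htn : t ≤ P.natDegree)
    {H : K[X]} (hHm : H.Monic) (hHdeg : H.natDegree = ∑ k, (μ k - t))
    (hH : ∀ i ≤ t, H ∣ derivative^[i] P) :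
    ∃ c ≠ 0, subres P (fun j : Fin t => derivative^[(j : ℕ) + 1] P)
      (fun j : Fin t => #{k | (j : ℕ) + 1 ≤ μ k}) = C c * H := by
  set δ : Fin t → ℕ := fun j => #{k | (j : ℕ) + 1 ≤ μ k}
  have hδ0 := delta0_iterate_derivative hm hpos P ht htn
  have hF : (Fin.cons P fun j : Fin t => derivative^[(j : ℕ) + 1] P : Fin (t + 1) → K[X]) =
      fun i : Fin (t + 1) => derivative^[(i : ℕ)] P :=
    Fin.cons_self_tail (fun i : Fin (t + 1) => derivative^[(i : ℕ)] P)
  have hsumδ : ∑ j, δ j = ∑ k, min (μ k) t := by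
    rw [Fin.sum_univ_eq_sum_range (fun j => #{k | j + 1 ≤ μ k}), sum_range_card_filter_succ_le]
  have hsplit : ∑ k, min (μ k) t + ∑ k, (μ k - t) = P.natDegree := by
    rw [hdegP, ← Finset.sum_add_distrib]
    exact Finset.sum_congr rfl fun k _ => by omega
  have hmin : m ≤ ∑ k, min (μ k) t :=
    calc m = ∑ _k : Fin m, 1 := by simp
      _ ≤ _ := Finset.sum_le_sum fun k _ => le_min (hpos k) ht
  rw [subres_eq_detPoly_sylvesterMatrix, hF]
  refine exists_detPoly_sylvesterMatrix_eq_C_mul ?_ ?_ (fun i => ?_) (fun B hB hB0 => ?_) hHm ?_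
    (fun i => hH i (by omega))
  · rw [Fin.sum_cons, hsumδ]; omega
  · rw [Fin.sum_cons, hsumδ]; omega
  · rw [natDegree_iterate_derivative_eq]
    refine Fin.cases (by simp only [Fin.cons_zero]; omega) (fun j => ?_) i
    have : δ j ≤ m := (card_filter_le _ _).trans (card_fin m).le
    have := j.2
    simp only [Fin.cons_succ, Fin.val_succ]
    rw [hδ0]
    omega
  · refine eq_zero_of_sum_mul_iterate_derivative_eq_zero hP hr hμ B
      (fun i => (hB i).trans_le ?_) hB0
    refine Fin.cases ?_ (fun j => by simp [δ]) i
    simp only [Fin.cons_zero, Fin.val_zero, zero_le, filter_true, card_univ, Fintype.card_fin]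
    rw [hδ0]
    exact_mod_cast Nat.sub_le m 1
  · rw [Fin.sum_cons, hHdeg, hsumδ]
    omega

theorem stmt_14_general {n m : ℕ} (hm : 0 < m) (a : ℂ) (ha : a ≠ 0)
    (r : Fin m → ℂ) (hr : Function.Injective r) (μ : Fin m → ℕ)
    (hpos : ∀ j, 1 ≤ μ j) (hsum : ∑ j, μ j = n) (P : ℂ[X])
    (hP : P = C a * ∏ k, (X - C (r k)) ^ μ k)
    (bar : ℕ → ℕ)
    (hbar : ∀ i, bar i = (Finset.univ.filter fun j => i ≤ μ j).card) :
    ∀ i : ℕ, 1 ≤ i → i ≤ n →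
      ∃ c : ℂ, c ≠ 0 ∧
        subres P (fun j : Fin i => derivative^[(j : ℕ) + 1] P)
            (fun j : Fin i => bar ((j : ℕ) + 1))
          = C c * Finset.gcd (Finset.range (i + 1)) (fun j => derivative^[j] P) := by
  intro t ht htn
  obtain rfl : bar = fun i => #{j | i ≤ μ j} := funext hbar
  have hP0 : P ≠ 0 := hP ▸ mul_ne_zero (C_ne_zero.mpr ha) (monic_prod_X_sub_C_pow _ _ _).ne_zero
  have hdegP : P.natDegree = n := by rw [hP, natDegree_C_mul ha, natDegree_prod_X_sub_C_pow, hsum]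
  have hmult (x : ℂ) : rootMultiplicity x P = rootMultiplicity x (∏ k, (X - C (r k)) ^ μ k) := by
    rw [hP, rootMultiplicity_mul (hP ▸ hP0), rootMultiplicity_C, zero_add]
  set H : ℂ[X] := ∏ k, (X - C (r k)) ^ (μ k - t)
  have hgcd := associated_gcd_iterate_derivative hP0 (monic_prod_X_sub_C_pow _ _ _).ne_zero t
    fun x => by rw [hmult, rootMultiplicity_prod_X_sub_C_pow_tsub hr]
  obtain ⟨c, hc, hsub⟩ := exists_subres_iterate_derivative_eq_C_mul hm hr hpos hP0
    (by rw [hdegP, hsum])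
    (fun k => by simp [hmult, rootMultiplicity_prod_X_sub_C_pow, hr.eq_iff])
    ht (by omega) (monic_prod_X_sub_C_pow _ _ _) (natDegree_prod_X_sub_C_pow _ _ _)
    (fun i hi => hgcd.symm.dvd.trans (Finset.gcd_dvd (mem_range.mpr (by omega))))
  obtain ⟨u, hu⟩ := hgcd
  obtain ⟨b, hb, hbu⟩ := Polynomial.isUnit_iff.mp u.isUnit
  exact ⟨c * b, mul_ne_zero hc hb.ne_zero, by rw [hsub, ← hu, ← hbu, C_mul]; ring⟩

/-- Main theorem (incremental gcd via non-nested subresultants): for `P` over `ℂ` of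
degree `n` with multiplicity vector `μ` and conjugate `μ̄`, for each `1 ≤ i ≤ n` the
subresultant `R_{(μ̄_1,…,μ̄_i)}(P⁽⁰⁾, …, P⁽ⁱ⁾)` is a nonzero constant multiple of
`gcd(P⁽⁰⁾, …, P⁽ⁱ⁾)`. -/
theorem stmt_14 {n m : ℕ} (hn : 1 ≤ n) (hm : 0 < m) (a : ℂ) (ha : a ≠ 0)
    (r : Fin m → ℂ) (hr : Function.Injective r) (μ : Fin m → ℕ) (hanti : Antitone μ)
    (hpos : ∀ j, 1 ≤ μ j) (hsum : ∑ j, μ j = n) (P : ℂ[X])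
    (hP : P = C a * ∏ k, (X - C (r k)) ^ μ k)
    (bar : ℕ → ℕ)
    (hbar : ∀ i, bar i = (Finset.univ.filter fun j => i ≤ μ j).card) :
    ∀ i : ℕ, 1 ≤ i → i ≤ n →
      ∃ c : ℂ, c ≠ 0 ∧
        subres P (fun j : Fin i => derivative^[(j : ℕ) + 1] P)
            (fun j : Fin i => bar ((j : ℕ) + 1))
          = C c * Finset.gcd (Finset.range (i + 1)) (fun j => derivative^[j] P) :=
  stmt_14_general hm a ha r hr μ hpos hsum P hP bar hbar
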